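/- (Proposition 3.4) Let (Λ^k, z^k, w^k), ε_k be a singular sequence of normalized central configurations of the N-vortex problem with vorticities Γ_1, …, Γ_N ∈ ℝ∖{0}. Suppose the vertices 1, 2, 3, 4 form a fully z-stroked sub-diagram isolated in the z-diagram: w^k_i − w^k_j ≈ ε_k² for all pairs i < j in {1,2,3,4}, and ε_k² ≺ w^k_i − w^k_l for all i ∈ {1,2,3,4} and l ∉ {1,2,3,4}; and suppose none of the vertices 1, 2, 3, 4 is z-circled: z^k_j ≺ ε_k^{-2} for j ∈ {1,2,3,4}. Then L₁₂₃₄ = Γ_1Γ_2 + Γ_2Γ_3 + Γ_3Γ_1 + Γ_4(Γ_1 + Γ_2 + Γ_3) = 0. -/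

import Mathlib

open Finset Filter Topology

/-- Normalized central configuration of the planar N-vortex problem (N = M + 2),
in the complexified variables (Λ, z, w), with the normalizations removing the
translation, rotation and dilation freedoms. -/
def IsNCC {M : ℕ} (Γ : Fin (M + 2) → ℝ) (Λ : ℂ) (z w : Fin (M + 2) → ℂ) : Prop :=
  Λ ≠ 0 ∧ Function.Injective z ∧ Function.Injective w ∧
  (∀ n, Λ * z n =
    ∑ j ∈ Finset.univ.filter (fun j => j ≠ n), (Γ j : ℂ) / (w n - w j)) ∧
  (∀ n, Λ⁻¹ * w n =
    ∑ j ∈ Finset.univ.filter (fun j => j ≠ n), (Γ j : ℂ) / (z n - z j)) ∧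
  z 1 - z 0 = w 1 - w 0

/-- max(max_n |z_n|, max_{i ≠ j} |w_i − w_j|⁻¹). -/
noncomputable def bigSup {M : ℕ} (z w : Fin (M + 2) → ℂ) : ℝ :=
  sSup ({r | ∃ n, r = ‖z n‖} ∪
        {r | ∃ i j, i ≠ j ∧ r = (‖w i - w j‖)⁻¹})

/-- a ≺ b : the ratio a/b tends to 0. -/
def Prec (a b : ℕ → ℂ) : Prop := Tendsto (fun k => a k / b k) atTop (nhds 0)

/-- a ⪯ b : the ratio a/b is bounded. -/
def BddRatio (a b : ℕ → ℂ) : Prop := ∃ C : ℝ, ∀ k, ‖a k / b k‖ ≤ C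

/-- a ≈ b : both a/b and b/a are bounded. -/
def SimEq (a b : ℕ → ℂ) : Prop := BddRatio a b ∧ BddRatio b a

/-- A singular sequence of normalized central configurations: |Λ^k| = 1,
ε_k > 0 tends to 0, and the maximal components of 𝒵 and 𝒲 both equal ε_k⁻². -/
def IsSingularSeq {M : ℕ} (Γ : Fin (M + 2) → ℝ) (Λ : ℕ → ℂ)
    (z w : ℕ → Fin (M + 2) → ℂ) (ε : ℕ → ℝ) : Prop :=
  (∀ k, IsNCC Γ (Λ k) (z k) (w k)) ∧
  (∀ k, ‖Λ k‖ = 1) ∧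
  (∀ k, 0 < ε k) ∧ Tendsto ε atTop (nhds 0) ∧
  (∀ k, bigSup (z k) (w k) = ε k ^ (-2 : ℤ)) ∧
  (∀ k, bigSup (w k) (z k) = ε k ^ (-2 : ℤ))

/-! Multiply the equation `Λ z_n = ∑_{j ≠ n} Γ_j / (w_n - w_j)` by `Γ_n (w_n - w_1)` and sum over
the cluster `n ∈ {1, 2, 3, 4}`. Inside the cluster the terms symmetrize to the constant
`∑_{i < j} Γ_i Γ_j = L₁₂₃₄`. Every other term tends to `0`: `Λ z_n (w_n - w_1)` is
`o(ε⁻²) · O(ε²)`, since no vertex is circled and the cluster is stroked, and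
`(w_n - w_1) / (w_n - w_l)` is `O(ε²) / ω(ε²)` for `l` outside, since the cluster is isolated. -/

theorem Prec.tendsto_mul_of_bddRatio {a b c d : ℕ → ℂ} (hab : Prec a b) (hcd : BddRatio c d)
    (hbd : ∀ k, b k * d k = 1) : Tendsto (fun k => a k * c k) atTop (𝓝 0) := by
  obtain ⟨C, hC⟩ := hcd
  refine (hab.zero_mul_isBoundedUnder_le (isBoundedUnder_of ⟨C, hC⟩)).congr fun k => ?_
  rw [← mul_div_mul_comm, hbd, div_one]

theorem BddRatio.trans_prec {a b c : ℕ → ℂ} (hca : BddRatio c a) (hab : Prec a b)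
    (ha : ∀ k, a k ≠ 0) : Prec c b := by
  obtain ⟨C, hC⟩ := hca
  refine (isBoundedUnder_le_mul_tendsto_zero (isBoundedUnder_of ⟨C, hC⟩) hab).congr fun k => ?_
  field_simp [ha k]

section Symmetrization

variable {ι K : Type*} [DecidableEq ι] [Field K]

-- Diagonal terms are `_ / 0 = 0`, and the terms `(i, j)` and `(j, i)` add up to `Γ i * Γ j`.
theorem two_mul_sum_sum_mul_div_sub (Γ w : ι → K) (a : K) {C : Finset ι}
    (hw : Set.InjOn w C) :
    2 * ∑ i ∈ C, ∑ j ∈ C, Γ i * Γ j * ((w i - a) / (w i - w j)) =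
      (∑ i ∈ C, Γ i) ^ 2 - ∑ i ∈ C, Γ i ^ 2 := by
  rw [two_mul]
  nth_rw 2 [Finset.sum_comm]
  rw [← sum_add_distrib, sq, sum_mul_sum, ← sum_sub_distrib]
  refine sum_congr rfl fun i hi => ?_
  have hdiag : Γ i ^ 2 = ∑ j ∈ C, if i = j then Γ i * Γ j else 0 := by simp [hi, sq]
  rw [← sum_add_distrib, hdiag, ← sum_sub_distrib]
  refine sum_congr rfl fun j hj => ?_
  by_cases hij : i = j
  · subst hij; simp
  · have hw' : w i - w j ≠ 0 := sub_ne_zero.2 fun h => hij (hw hi hj h)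
    rw [if_neg hij, ← neg_sub (w i), div_neg]
    field_simp [hw']
    ring

theorem two_mul_sub_sum_compl_eq [Fintype ι] {Γ z w : ι → K} {Λ : K} (hw : Function.Injective w)
    (hz : ∀ n, Λ * z n = ∑ j ∈ univ.filter (fun j => j ≠ n), Γ j / (w n - w j))
    (a : K) (C : Finset ι) :
    2 * (Λ * ∑ n ∈ C, Γ n * z n * (w n - a) -
        ∑ n ∈ C, ∑ l ∈ Cᶜ, Γ n * Γ l * ((w n - a) / (w n - w l))) =
      (∑ n ∈ C, Γ n) ^ 2 - ∑ n ∈ C, Γ n ^ 2 := by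
  have hrow : ∀ n, Λ * (Γ n * z n * (w n - a)) =
      ∑ j, Γ n * Γ j * ((w n - a) / (w n - w j)) := by
    intro n
    rw [show Λ * (Γ n * z n * (w n - a)) = Γ n * (w n - a) * (Λ * z n) by ring, hz, mul_sum,
      sum_filter]
    refine sum_congr rfl fun j _ => ?_
    -- the missing term `j = n` is `_ / (w n - w n) = 0`
    split_ifs with h
    · ring
    · simp [not_not.1 h]
  rw [mul_sum, sum_congr rfl fun n _ => hrow n]
  simp_rw [← sum_add_sum_compl C]
  rw [sum_add_distrib, add_sub_cancel_right]
  exact two_mul_sum_sum_mul_div_sub Γ w a hw.injOn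

end Symmetrization

theorem sq_sum_sub_sum_sq_fin_four {K : Type*} [Field K] {M : ℕ} (Γ : Fin (M + 4) → K) :
    (∑ n ∈ ({0, 1, 2, 3} : Finset (Fin (M + 4))), Γ n) ^ 2 -
        ∑ n ∈ ({0, 1, 2, 3} : Finset (Fin (M + 4))), Γ n ^ 2 =
      2 * (Γ 0 * Γ 1 + Γ 1 * Γ 2 + Γ 2 * Γ 0 + Γ 3 * (Γ 0 + Γ 1 + Γ 2)) := by
  have h2 : 2 % (M + 4) = 2 := Nat.mod_eq_of_lt (by omega)
  have h3 : 3 % (M + 4) = 3 := Nat.mod_eq_of_lt (by omega)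
  rw [sum_insert, sum_insert, sum_insert, sum_singleton, sum_insert, sum_insert, sum_insert,
    sum_singleton]
  · ring
  all_goals simp [Fin.ext_iff, h2, h3]

theorem isolated_four_clique_no_circle_general
    {M : ℕ} (Γ : Fin (M + 4) → ℝ)
    (Λ : ℕ → ℂ) (z w : ℕ → Fin (M + 4) → ℂ) (ε : ℕ → ℝ)
    (hsing : IsSingularSeq Γ Λ z w ε)
    (hstroke : ∀ i ∈ ({0, 1, 2, 3} : Finset (Fin (M + 4))),
      ∀ j ∈ ({0, 1, 2, 3} : Finset (Fin (M + 4))), i ≠ j →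
        SimEq (fun k => w k i - w k j) (fun k => ((ε k : ℂ)) ^ 2))
    (hiso : ∀ i ∈ ({0, 1, 2, 3} : Finset (Fin (M + 4))),
      ∀ l ∉ ({0, 1, 2, 3} : Finset (Fin (M + 4))),
        Prec (fun k => ((ε k : ℂ)) ^ 2) (fun k => w k i - w k l))
    (hnocirc : ∀ j ∈ ({0, 1, 2, 3} : Finset (Fin (M + 4))),
      Prec (fun k => z k j) (fun k => ((ε k ^ (-2 : ℤ) : ℝ) : ℂ))) :
    Γ 0 * Γ 1 + Γ 1 * Γ 2 + Γ 2 * Γ 0 + Γ 3 * (Γ 0 + Γ 1 + Γ 2) = 0 := by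
  obtain ⟨hncc, hΛ, hε, -, -, -⟩ := hsing
  set C : Finset (Fin (M + 4)) := {0, 1, 2, 3}
  have hε0 : ∀ k, (ε k : ℂ) ^ 2 ≠ 0 := fun k => pow_ne_zero 2 (by exact_mod_cast (hε k).ne')
  have hbdd : ∀ n ∈ C, BddRatio (fun k => w k n - w k 0) (fun k => (ε k : ℂ) ^ 2) := by
    intro n hn
    by_cases h : n = 0
    · exact ⟨0, fun k => by simp [h]⟩
    · exact (hstroke n hn 0 (by simp [C]) h).1
  have hself : Tendsto (fun k => Λ k * ∑ n ∈ C, (Γ n : ℂ) * z k n * (w k n - w k 0))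
      atTop (𝓝 0) := by
    refine isBoundedUnder_le_mul_tendsto_zero (isBoundedUnder_of ⟨1, fun k => (hΛ k).le⟩) ?_
    simpa [mul_assoc] using tendsto_finsetSum C fun n hn =>
      ((hnocirc n hn).tendsto_mul_of_bddRatio (hbdd n hn) fun k => by simp [hε0]).const_mul _
  have hcross : Tendsto (fun k => ∑ n ∈ C, ∑ l ∈ Cᶜ,
      (Γ n : ℂ) * Γ l * ((w k n - w k 0) / (w k n - w k l))) atTop (𝓝 0) := by
    simpa using tendsto_finsetSum C fun n hn => tendsto_finsetSum Cᶜ fun l hl =>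
      ((hbdd n hn).trans_prec (hiso n hn l (mem_compl.1 hl)) hε0).const_mul ((Γ n : ℂ) * Γ l)
  have hL := tendsto_nhds_unique tendsto_const_nhds (((hself.sub hcross).const_mul 2).congr
    fun k => two_mul_sub_sum_compl_eq (hncc k).2.2.1 (hncc k).2.2.2.1 (w k 0) C)
  rw [sub_zero, mul_zero, sq_sum_sub_sum_sq_fin_four, mul_eq_zero] at hL
  exact_mod_cast hL.resolve_left two_ne_zero

/-- Proposition 3.4: a fully z-stroked isolated sub-diagram on four vertices
(1, 2, 3, 4, here indices 0, 1, 2, 3) with no z-circled vertex forces L₁₂₃₄ = 0. -/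
theorem isolated_four_clique_no_circle
    {M : ℕ} (Γ : Fin (M + 4) → ℝ) (hΓ : ∀ j, Γ j ≠ 0)
    (Λ : ℕ → ℂ) (z w : ℕ → Fin (M + 4) → ℂ) (ε : ℕ → ℝ)
    (hsing : IsSingularSeq Γ Λ z w ε)
    (hstroke : ∀ i ∈ ({0, 1, 2, 3} : Finset (Fin (M + 4))),
      ∀ j ∈ ({0, 1, 2, 3} : Finset (Fin (M + 4))), i ≠ j →
        SimEq (fun k => w k i - w k j) (fun k => ((ε k : ℂ)) ^ 2))
    (hiso : ∀ i ∈ ({0, 1, 2, 3} : Finset (Fin (M + 4))),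
      ∀ l ∉ ({0, 1, 2, 3} : Finset (Fin (M + 4))),
        Prec (fun k => ((ε k : ℂ)) ^ 2) (fun k => w k i - w k l))
    (hnocirc : ∀ j ∈ ({0, 1, 2, 3} : Finset (Fin (M + 4))),
      Prec (fun k => z k j) (fun k => ((ε k ^ (-2 : ℤ) : ℝ) : ℂ))) :
    Γ 0 * Γ 1 + Γ 1 * Γ 2 + Γ 2 * Γ 0 + Γ 3 * (Γ 0 + Γ 1 + Γ 2) = 0 :=
  isolated_four_clique_no_circle_general Γ Λ z w ε hsing hstroke hiso hnocirc
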